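/- arXiv:1510.04977 — 3 statements merged into one kernel-verified Lean document; each statement's English description precedes it below -/
import Mathlib

section
/- Let μ be a probability measure on a product space U × U with marginals μ_1, μ_2, let G: U → R satisfy c^{-1} < G < c, and let M be a Markov kernel from U×U to U×U whose first marginal depends only on the first coordinate (via kernel M_1) and second marginal only on the second coordinate (via M_2). Define the coupled Bayes operator Φ̄(μ) as the mixture: with weight μ(Ḡ_μ), the measure μ(Ḡ_μ M(·,dv))/μ(Ḡ_μ), plus with weight 1-μ(Ḡ_μ), the product-residual part, where G_{j,μ}(u) = G(u)/μ_j(G) and Ḡ_μ(u_1,u_2) = min(G_{1,μ}(u_1), G_{2,μ}(u_2)). Then for any bounded measurable φ: U → R and j ∈ {1,2}, Φ̄(μ)(φ_j) = μ_j(G M_j(φ))/μ_j(G), i.e., the j-th marginal of the coupled Bayes update equals the standard Bayes (Feynman-Kac) update of the j-th marginal. -/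
open MeasureTheory ProbabilityTheory

private lemma intg_of_bdd {α : Type*} [MeasurableSpace α] {ν : Measure α} [IsFiniteMeasure ν]
    {f : α → ℝ} (hm : AEStronglyMeasurable f ν) {C : ℝ} (h : ∀ x, |f x| ≤ C) :
    Integrable f ν :=
  ⟨hm, HasFiniteIntegral.of_bounded (C := C) (ae_of_all _ fun x => by
    simpa [Real.norm_eq_abs] using h x)⟩

private lemma int_mul_zero_of_nonneg {α : Type*} [MeasurableSpace α] {ν : Measure α}
    {d h : α → ℝ} (hd0 : ∀ v, 0 ≤ d v) (hdint : Integrable d ν)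
    (hz : ∫ v, d v ∂ν = 0) : ∫ v, d v * h v ∂ν = 0 := by
  have hae : d =ᵐ[ν] 0 := (integral_eq_zero_iff_of_nonneg hd0 hdint).mp hz
  have h2 : (fun v => d v * h v) =ᵐ[ν] 0 := hae.mono fun v hv => by simp [hv]
  rw [integral_congr_ae h2]; simp


/-- The `j`-th marginal of the coupled Bayes update `Φ̄(μ)` equals the standard Bayes
(Feynman–Kac) update of the `j`-th marginal of `μ`: for a coupling `μ` with marginals
`μ₁, μ₂`, a potential `c⁻¹ < G < c`, and a coupled Markov kernel `M` whose first
(resp. second) marginal depends only on the first (resp. second) coordinate via `M₁`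
(resp. `M₂`),
`Φ̄(μ)(φ_j) = μ_j(G·M_j(φ)) / μ_j(G)`. -/
theorem stmt5 (U : Type*) [MeasurableSpace U]
    (μ : Measure (U × U)) [IsProbabilityMeasure μ]
    (μ₁ μ₂ : Measure U)
    (hμ₁ : μ.map Prod.fst = μ₁) (hμ₂ : μ.map Prod.snd = μ₂)
    (G : U → ℝ) (hGmeas : Measurable G)
    (c : ℝ) (hc : 1 < c) (hG : ∀ x, c⁻¹ < G x ∧ G x < c)
    (M : ProbabilityTheory.Kernel (U × U) (U × U)) [IsMarkovKernel M]
    (M₁ M₂ : ProbabilityTheory.Kernel U U) [IsMarkovKernel M₁] [IsMarkovKernel M₂]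
    (hM₁ : ∀ v : U × U, (M v).map Prod.fst = M₁ v.1)
    (hM₂ : ∀ v : U × U, (M v).map Prod.snd = M₂ v.2)
    (φ : U → ℝ) (hφ : Measurable φ) (bφ : ℝ) (hbφ : ∀ x, |φ x| ≤ bφ)
    (j : Fin 2) :
    -- normalized potentials and their coupled minimum
    let g₁ : U → ℝ := fun u => G u / ∫ x, G x ∂μ₁
    let g₂ : U → ℝ := fun u => G u / ∫ x, G x ∂μ₂
    let Gbar : U × U → ℝ := fun v => min (g₁ v.1) (g₂ v.2)
    let a : ℝ := ∫ v, Gbar v ∂μ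
    let n₁ : ℝ := ∫ v, (g₁ v.1 - Gbar v) ∂μ
    let n₂ : ℝ := ∫ v, (g₂ v.2 - Gbar v) ∂μ
    let proj : Fin 2 → U × U → U := fun j v => if j = 0 then v.1 else v.2
    let μj : Measure U := if j = 0 then μ₁ else μ₂
    let Mj : ProbabilityTheory.Kernel U U := if j = 0 then M₁ else M₂
    -- coupled Bayes update Φ̄(μ), applied to φ_j = φ ∘ proj j
    (∫ v, (Gbar v * ∫ w, φ (proj j w) ∂(M v)) ∂μ)
      + (1 - a) * ∫ v, (∫ w', (((g₁ v.1 - Gbar v) / n₁) * ((g₂ w'.2 - Gbar w') / n₂)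
          * ∫ w, φ (proj j w) ∂(M (v.1, w'.2))) ∂μ) ∂μ
    = (∫ u, (G u * ∫ x, φ x ∂(Mj u)) ∂μj) / ∫ u, G u ∂μj := by
  intro g₁ g₂ Gbar a n₁ n₂ proj μj Mj
  haveI hP1 : IsProbabilityMeasure μ₁ := hμ₁ ▸ Measure.isProbabilityMeasure_map measurable_fst.aemeasurable
  haveI hP2 : IsProbabilityMeasure μ₂ := hμ₂ ▸ Measure.isProbabilityMeasure_map measurable_snd.aemeasurable
  have hc0 : (0:ℝ) < c := lt_trans one_pos hc
  have hGpos : ∀ x, 0 < G x := fun x => lt_trans (inv_pos.mpr hc0) (hG x).1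
  have hGabs : ∀ x, |G x| ≤ c := fun x => abs_le.mpr ⟨by nlinarith [hGpos x], (hG x).2.le⟩
  have hGint1 : Integrable G μ₁ := intg_of_bdd hGmeas.aestronglyMeasurable hGabs
  have hA1 : 0 < ∫ x, G x ∂μ₁ := by
    have h1 : c⁻¹ ≤ ∫ x, G x ∂μ₁ := by
      have := integral_mono (integrable_const c⁻¹) hGint1 (fun x => (hG x).1.le)
      simpa using this
    linarith [inv_pos.mpr hc0]
  have hGint2 : Integrable G μ₂ := intg_of_bdd hGmeas.aestronglyMeasurable hGabs
  have hA2 : 0 < ∫ x, G x ∂μ₂ := by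
    have h1 : c⁻¹ ≤ ∫ x, G x ∂μ₂ := by
      have := integral_mono (integrable_const c⁻¹) hGint2 (fun x => (hG x).1.le)
      simpa using this
    linarith [inv_pos.mpr hc0]
  -- nonempty and bφ ≥ 0
  have hne : Nonempty U := by
    by_contra h
    rw [not_nonempty_iff] at h
    have h1 : (μ Set.univ) = 1 := measure_univ
    haveI : IsEmpty (U × U) := ⟨fun p => h.false p.1⟩
    rw [Set.univ_eq_empty_iff.mpr ‹IsEmpty (U × U)›, measure_empty] at h1
    exact zero_ne_one h1
  have hbφ0 : 0 ≤ bφ := le_trans (abs_nonneg _) (hbφ hne.some)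
  -- measurability
  have hg₁m : Measurable g₁ := hGmeas.div_const _
  have hg₂m : Measurable g₂ := hGmeas.div_const _
  have hGbarm : Measurable Gbar := (hg₁m.comp measurable_fst).min (hg₂m.comp measurable_snd)
  -- bound
  set B : ℝ := c / (∫ x, G x ∂μ₁) + c / (∫ x, G x ∂μ₂) with hBdef
  have hB0 : 0 ≤ B := by positivity
  have hg₁0 : ∀ u, 0 ≤ g₁ u := fun u => div_nonneg (hGpos u).le hA1.le
  have hg₂0 : ∀ u, 0 ≤ g₂ u := fun u => div_nonneg (hGpos u).le hA2.le
  have hg₁b : ∀ u, g₁ u ≤ B := fun u => by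
    have h1 : G u / (∫ x, G x ∂μ₁) ≤ c / (∫ x, G x ∂μ₁) :=
      div_le_div_of_nonneg_right (hG u).2.le hA1.le
    have h2 : 0 ≤ c / (∫ x, G x ∂μ₂) := by positivity
    calc g₁ u = G u / (∫ x, G x ∂μ₁) := rfl
      _ ≤ B := by rw [hBdef]; linarith
  have hg₂b : ∀ u, g₂ u ≤ B := fun u => by
    have h1 : G u / (∫ x, G x ∂μ₂) ≤ c / (∫ x, G x ∂μ₂) :=
      div_le_div_of_nonneg_right (hG u).2.le hA2.le
    have h2 : 0 ≤ c / (∫ x, G x ∂μ₁) := by positivity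
    calc g₂ u = G u / (∫ x, G x ∂μ₂) := rfl
      _ ≤ B := by rw [hBdef]; linarith
  have hGbar0 : ∀ v, 0 ≤ Gbar v := fun v => le_min (hg₁0 _) (hg₂0 _)
  have hGbarb : ∀ v, Gbar v ≤ B := fun v => le_trans (min_le_left _ _) (hg₁b _)
  have hGbarabs : ∀ v, |Gbar v| ≤ B := fun v => abs_le.mpr ⟨by linarith [hGbar0 v], hGbarb v⟩
  have IGbar : Integrable Gbar μ := intg_of_bdd hGbarm.aestronglyMeasurable hGbarabs
  have Ig1 : Integrable (fun v : U × U => g₁ v.1) μ :=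
    intg_of_bdd (hg₁m.comp measurable_fst).aestronglyMeasurable
      (fun v => abs_le.mpr ⟨by linarith [hg₁0 v.1], hg₁b v.1⟩)
  have Ig2 : Integrable (fun v : U × U => g₂ v.2) μ :=
    intg_of_bdd (hg₂m.comp measurable_snd).aestronglyMeasurable
      (fun v => abs_le.mpr ⟨by linarith [hg₂0 v.2], hg₂b v.2⟩)
  -- integrals of normalized potentials
  have hint_g1 : ∫ v, g₁ v.1 ∂μ = 1 := by
    have h1 : ∫ v, g₁ v.1 ∂μ = ∫ u, g₁ u ∂μ₁ := by
      rw [← hμ₁]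
      exact (integral_map measurable_fst.aemeasurable hg₁m.aestronglyMeasurable).symm
    rw [h1]
    show ∫ u, G u / (∫ x, G x ∂μ₁) ∂μ₁ = 1
    rw [integral_div, div_self hA1.ne']
  have hint_g2 : ∫ v, g₂ v.2 ∂μ = 1 := by
    have h1 : ∫ v, g₂ v.2 ∂μ = ∫ u, g₂ u ∂μ₂ := by
      rw [← hμ₂]
      exact (integral_map measurable_snd.aemeasurable hg₂m.aestronglyMeasurable).symm
    rw [h1]
    show ∫ u, G u / (∫ x, G x ∂μ₂) ∂μ₂ = 1
    rw [integral_div, div_self hA2.ne']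
  have hn₁ : n₁ = 1 - a := by
    show ∫ v, (g₁ v.1 - Gbar v) ∂μ = 1 - a
    rw [integral_sub Ig1 IGbar, hint_g1]
  have hn₂ : n₂ = 1 - a := by
    show ∫ v, (g₂ v.2 - Gbar v) ∂μ = 1 - a
    rw [integral_sub Ig2 IGbar, hint_g2]
  
  have hj01 : j = 0 ∨ j = 1 := by omega
  rcases hj01 with hj | hj <;> subst hj
  · -- j = 0
    have hμj : μj = μ₁ := rfl
    have hMj : Mj = M₁ := rfl
    have hproj : ∀ w : U × U, proj 0 w = w.1 := fun w => rfl
    simp only [hμj, hMj, hproj]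
    -- the function F = M₁ φ
    set F : U → ℝ := fun u => ∫ x, φ x ∂(M₁ u) with hFdef
    have hFm : StronglyMeasurable F := by
      have h0 : StronglyMeasurable (fun p : U × U => φ p.2) :=
        hφ.stronglyMeasurable.comp_measurable measurable_snd
      exact h0.integral_kernel_prod_right'
    have hFabs : ∀ u, |F u| ≤ bφ := by
      intro u
      have h0 := norm_integral_le_of_norm_le_const (μ := M₁ u) (f := φ) (C := bφ)
        (ae_of_all _ fun x => by simpa [Real.norm_eq_abs] using hbφ x)
      simpa [Real.norm_eq_abs, measure_univ] using h0
    have hK : ∀ v : U × U, ∫ w, φ w.1 ∂(M v) = F v.1 := by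
      intro v
      have h1 := integral_map (μ := M v) measurable_fst.aemeasurable hφ.aestronglyMeasurable
      rw [hM₁ v] at h1
      exact h1.symm
    simp only [hK]
    rw [hn₁, hn₂]
    set t : ℝ := 1 - a with htdef
    -- integrability of products
    have IGbarF : Integrable (fun v : U × U => Gbar v * F v.1) μ :=
      intg_of_bdd (hGbarm.aestronglyMeasurable.mul
          (hFm.measurable.comp measurable_fst).aestronglyMeasurable)
        (C := B * bφ) (fun v => by
          rw [abs_mul]
          exact mul_le_mul (hGbarabs v) (hFabs v.1) (abs_nonneg _) hB0)
    have hD0 : ∀ v : U × U, 0 ≤ g₁ v.1 - Gbar v := fun v =>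
      sub_nonneg.mpr (min_le_left _ _)
    have ID : Integrable (fun v : U × U => g₁ v.1 - Gbar v) μ := Ig1.sub IGbar
    have IDF : Integrable (fun v : U × U => (g₁ v.1 - Gbar v) * F v.1) μ :=
      intg_of_bdd (((hg₁m.comp measurable_fst).sub hGbarm).aestronglyMeasurable.mul
          (hFm.measurable.comp measurable_fst).aestronglyMeasurable)
        (C := B * bφ) (fun v => by
          rw [abs_mul]
          refine mul_le_mul ?_ (hFabs v.1) (abs_nonneg _) hB0
          rw [abs_of_nonneg (hD0 v)]
          have := hGbar0 v
          have := hg₁b v.1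
          linarith)
    -- compute the inner integral
    have hinner : ∀ v : U × U,
        (∫ w', ((g₁ v.1 - Gbar v) / t * ((g₂ w'.2 - Gbar w') / t) * F v.1) ∂μ)
        = 1 / t / t * t * ((g₁ v.1 - Gbar v) * F v.1) := by
      intro v
      have h1 : (fun w' : U × U => (g₁ v.1 - Gbar v) / t * ((g₂ w'.2 - Gbar w') / t) * F v.1)
          = fun w' : U × U => ((g₁ v.1 - Gbar v) * F v.1 / t / t) * (g₂ w'.2 - Gbar w') := by
        funext w'; ring
      rw [h1, integral_const_mul]
      rw [show (∫ w' : U × U, (g₂ w'.2 - Gbar w') ∂μ) = t from hn₂]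
      ring
    simp only [hinner]
    rw [integral_const_mul]
    have key : t * (1 / t / t * t * (∫ v, (g₁ v.1 - Gbar v) * F v.1 ∂μ))
        = ∫ v, (g₁ v.1 - Gbar v) * F v.1 ∂μ := by
      by_cases ht : t = 0
      · have hJ : ∫ v, (g₁ v.1 - Gbar v) * F v.1 ∂μ = 0 :=
          int_mul_zero_of_nonneg hD0 ID (hn₁.trans ht)
        rw [hJ, ht]; ring
      · field_simp
    rw [key]
    have hsum : ∫ v, Gbar v * F v.1 ∂μ + ∫ v, (g₁ v.1 - Gbar v) * F v.1 ∂μ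
        = ∫ v, g₁ v.1 * F v.1 ∂μ := by
      rw [← integral_add IGbarF IDF]
      congr 1; funext v; ring
    rw [hsum]
    have hmap : ∫ v, g₁ v.1 * F v.1 ∂μ = ∫ u, g₁ u * F u ∂μ₁ := by
      rw [← hμ₁]
      exact (integral_map measurable_fst.aemeasurable
        (hg₁m.stronglyMeasurable.mul hFm).aestronglyMeasurable).symm
    rw [hmap]
    have hfin : (fun u => g₁ u * F u) = fun u => (G u * F u) / (∫ x, G x ∂μ₁) := by
      funext u
      show G u / _ * F u = _
      ring
    rw [hfin, integral_div]
  · -- j = 1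
    have hμj : μj = μ₂ := rfl
    have hMj : Mj = M₂ := rfl
    have hproj : ∀ w : U × U, proj 1 w = w.2 := fun w => rfl
    simp only [hμj, hMj, hproj]
    set F : U → ℝ := fun u => ∫ x, φ x ∂(M₂ u) with hFdef
    have hFm : StronglyMeasurable F := by
      have h0 : StronglyMeasurable (fun p : U × U => φ p.2) :=
        hφ.stronglyMeasurable.comp_measurable measurable_snd
      exact h0.integral_kernel_prod_right'
    have hFabs : ∀ u, |F u| ≤ bφ := by
      intro u
      have h0 := norm_integral_le_of_norm_le_const (μ := M₂ u) (f := φ) (C := bφ)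
        (ae_of_all _ fun x => by simpa [Real.norm_eq_abs] using hbφ x)
      simpa [Real.norm_eq_abs, measure_univ] using h0
    have hK : ∀ v : U × U, ∫ w, φ w.2 ∂(M v) = F v.2 := by
      intro v
      have h1 := integral_map (μ := M v) measurable_snd.aemeasurable hφ.aestronglyMeasurable
      rw [hM₂ v] at h1
      exact h1.symm
    simp only [hK]
    rw [hn₁, hn₂]
    set t : ℝ := 1 - a with htdef
    have IGbarF : Integrable (fun v : U × U => Gbar v * F v.2) μ :=
      intg_of_bdd (hGbarm.aestronglyMeasurable.mul
          (hFm.measurable.comp measurable_snd).aestronglyMeasurable)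
        (C := B * bφ) (fun v => by
          rw [abs_mul]
          exact mul_le_mul (hGbarabs v) (hFabs v.2) (abs_nonneg _) hB0)
    have hD10 : ∀ v : U × U, 0 ≤ g₁ v.1 - Gbar v := fun v =>
      sub_nonneg.mpr (min_le_left _ _)
    have hD20 : ∀ v : U × U, 0 ≤ g₂ v.2 - Gbar v := fun v =>
      sub_nonneg.mpr (min_le_right _ _)
    have ID1 : Integrable (fun v : U × U => g₁ v.1 - Gbar v) μ := Ig1.sub IGbar
    have ID2 : Integrable (fun v : U × U => g₂ v.2 - Gbar v) μ := Ig2.sub IGbar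
    have IDF : Integrable (fun v : U × U => (g₂ v.2 - Gbar v) * F v.2) μ :=
      intg_of_bdd (((hg₂m.comp measurable_snd).sub hGbarm).aestronglyMeasurable.mul
          (hFm.measurable.comp measurable_snd).aestronglyMeasurable)
        (C := B * bφ) (fun v => by
          rw [abs_mul]
          refine mul_le_mul ?_ (hFabs v.2) (abs_nonneg _) hB0
          rw [abs_of_nonneg (hD20 v)]
          have := hGbar0 v
          have := hg₂b v.2
          linarith)
    set J : ℝ := ∫ w', (g₂ w'.2 - Gbar w') * F w'.2 ∂μ with hJdef
    have hinner : ∀ v : U × U,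
        (∫ w', ((g₁ v.1 - Gbar v) / t * ((g₂ w'.2 - Gbar w') / t) * F w'.2) ∂μ)
        = J / t / t * (g₁ v.1 - Gbar v) := by
      intro v
      have h1 : (fun w' : U × U => (g₁ v.1 - Gbar v) / t * ((g₂ w'.2 - Gbar w') / t) * F w'.2)
          = fun w' : U × U => ((g₁ v.1 - Gbar v) / t / t) * ((g₂ w'.2 - Gbar w') * F w'.2) := by
        funext w'; ring
      rw [h1, integral_const_mul, ← hJdef]
      ring
    simp only [hinner]
    rw [integral_const_mul]
    rw [show (∫ v : U × U, (g₁ v.1 - Gbar v) ∂μ) = t from hn₁]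
    have key : t * (J / t / t * t) = J := by
      by_cases ht : t = 0
      · have hJ0 : J = 0 := int_mul_zero_of_nonneg hD20 ID2 (hn₂.trans ht)
        rw [hJ0, ht]; ring
      · field_simp
    rw [key]
    have hsum : ∫ v, Gbar v * F v.2 ∂μ + J = ∫ v, g₂ v.2 * F v.2 ∂μ := by
      rw [hJdef, ← integral_add IGbarF IDF]
      congr 1; funext v; ring
    rw [hsum]
    have hmap : ∫ v, g₂ v.2 * F v.2 ∂μ = ∫ u, g₂ u * F u ∂μ₂ := by
      rw [← hμ₂]
      exact (integral_map measurable_snd.aemeasurable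
        (hg₂m.stronglyMeasurable.mul hFm).aestronglyMeasurable).symm
    rw [hmap]
    have hfin : (fun u => g₂ u * F u) = fun u => (G u * F u) / (∫ x, G x ∂μ₂) := by
      funext u
      show G u / _ * F u = _
      ring
    rw [hfin, integral_div]
end

section
/- Let η_0 be a probability measure on a space U, let G_0,...,G_{n-1}: U → (0,∞) be bounded measurable potentials, and let M_1,...,M_n be Markov kernels on U. Define the unnormalized Feynman-Kac measure γ_n(φ) = E[φ(X_n) Π_{p=0}^{n-1} G_p(X_p)] where X_0 ~ η_0 and X_p ~ M_p(X_{p-1},·). Let η_p^N be the empirical measures produced by a particle filter with N particles (sampling, weighting by G_p, multinomial resampling according to normalized weights, and mutation by M_{p+1}). Then the estimator (Π_{p=0}^{n-1} η_p^N(G_p)) · η_n^N(φ) is an unbiased estimator of γ_n(φ); in particular Π_{p=0}^{n-1} η_p^N(G_p) is unbiased for the normalizing constant γ_n(1). -/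
/-!
Write `Z_n = ∏_{p<n} η_p^N(G_p)`. Since `Z_{n+1}` is `F_n`-measurable and bounded, the tower
property and the sampling rule replace `η_{n+1}^N(φ)` by the Bayes-updated mixture
`η_n^N(G_n · M_{n+1}φ) / η_n^N(G_n)` inside `E[Z_{n+1} η_{n+1}^N(φ)]`. The denominator cancels the
last factor of `Z_{n+1}`, leaving `E[Z_n η_n^N(G_n · M_{n+1}φ)]`, which by induction equals
`γ_n(G_n · M_{n+1}φ) = γ_{n+1}(φ)`.
-/

open MeasureTheory ProbabilityTheory Finset

section MeasureLemmas

variable {α β : Type*} [MeasurableSpace α] [MeasurableSpace β]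

lemma integral_comp_kernel_eq_integral_integral {E : Type*} [NormedAddCommGroup E]
    [NormedSpace ℝ E] {μ : Measure α} {κ : Kernel α β} {f : β → E}
    (hf : Integrable f (κ ∘ₘ μ)) : ∫ y, f y ∂(κ ∘ₘ μ) = ∫ x, ∫ y, f y ∂κ x ∂μ := by
  rw [Measure.comp_eq_comp_const_apply] at hf ⊢
  rw [Kernel.integral_comp hf, Kernel.const_apply]

lemma integral_withDensity_ofReal {μ : Measure α} {g : α → ℝ} (hg : Measurable g)
    (hg0 : ∀ x, 0 ≤ g x) (f : α → ℝ) :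
    ∫ x, f x ∂μ.withDensity (fun x => ENNReal.ofReal (g x)) = ∫ x, g x * f x ∂μ := by
  rw [integral_withDensity_eq_integral_toReal_smul hg.ennreal_ofReal
    (ae_of_all _ fun _ => ENNReal.ofReal_lt_top)]
  simp only [ENNReal.toReal_ofReal (hg0 _), smul_eq_mul]

lemma isFiniteMeasure_withDensity_ofReal_of_le {μ : Measure α} [IsFiniteMeasure μ] {g : α → ℝ}
    {B : ℝ} (hgB : ∀ x, g x ≤ B) : IsFiniteMeasure (μ.withDensity fun x => ENNReal.ofReal (g x)) :=
  isFiniteMeasure_withDensity <| ne_top_of_le_ne_top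
    (by simpa using ENNReal.mul_ne_top ENNReal.ofReal_ne_top (measure_ne_top μ Set.univ))
    (lintegral_mono fun x => ENNReal.ofReal_le_ofReal (hgB x) :
      ∫⁻ x, ENNReal.ofReal (g x) ∂μ ≤ ∫⁻ _, ENNReal.ofReal B ∂μ)

lemma abs_integral_le_of_abs_le {μ : Measure α} [IsProbabilityMeasure μ] {f : α → ℝ} {b : ℝ}
    (hf : ∀ x, |f x| ≤ b) : |∫ x, f x ∂μ| ≤ b := by
  simpa using norm_integral_le_of_norm_le_const (μ := μ)
    (ae_of_all _ fun x => (Real.norm_eq_abs (f x)).trans_le (hf x))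

end MeasureLemmas

section ConditionalExpectation

variable {Ω : Type*} {m mΩ : MeasurableSpace Ω} {μ : Measure Ω} [IsFiniteMeasure μ]

lemma integral_mul_eq_of_condExp_ae_eq (hm : m ≤ mΩ) {f g h : Ω → ℝ}
    (hf : StronglyMeasurable[m] f) {c : ℝ} (hfc : ∀ᵐ ω ∂μ, ‖f ω‖ ≤ c) (hg : Integrable g μ)
    (hgh : μ[g | m] =ᵐ[μ] h) : ∫ ω, f ω * g ω ∂μ = ∫ ω, f ω * h ω ∂μ :=
  calc ∫ ω, f ω * g ω ∂μ = ∫ ω, μ[f * g | m] ω ∂μ := (integral_condExp hm).symm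
    _ = ∫ ω, f ω * h ω ∂μ := integral_congr_ae <| by
      filter_upwards [condExp_stronglyMeasurable_mul_of_bound hm hf hg c hfc, hgh] with ω h₁ h₂
      rw [h₁, Pi.mul_apply, h₂]

end ConditionalExpectation

section FeynmanKac

variable {U : Type*} [MeasurableSpace U]

noncomputable def feynmanKacMeasure (η₀ : Measure U) (G : ℕ → U → ℝ) (M : ℕ → Kernel U U)
    (n : ℕ) : Measure U :=
  Nat.rec η₀ (fun p γp => M (p + 1) ∘ₘ γp.withDensity fun x => ENNReal.ofReal (G p x)) n

variable {η₀ : Measure U} {G : ℕ → U → ℝ} {M : ℕ → Kernel U U}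

@[simp]
lemma feynmanKacMeasure_zero : feynmanKacMeasure η₀ G M 0 = η₀ := rfl

lemma feynmanKacMeasure_succ (n : ℕ) :
    feynmanKacMeasure η₀ G M (n + 1) =
      M (n + 1) ∘ₘ (feynmanKacMeasure η₀ G M n).withDensity fun x => ENNReal.ofReal (G n x) :=
  rfl

lemma isFiniteMeasure_feynmanKacMeasure [IsFiniteMeasure η₀] [∀ p, IsFiniteKernel (M p)]
    {B : ℝ} (hGB : ∀ p x, G p x ≤ B) (n : ℕ) : IsFiniteMeasure (feynmanKacMeasure η₀ G M n) := by
  induction n with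
  | zero => rwa [feynmanKacMeasure_zero]
  | succ n ih =>
    have := isFiniteMeasure_withDensity_ofReal_of_le (μ := feynmanKacMeasure η₀ G M n) (hGB n)
    rw [feynmanKacMeasure_succ]
    infer_instance

lemma integral_feynmanKacMeasure_succ [IsFiniteMeasure η₀] [∀ p, IsFiniteKernel (M p)]
    (hGm : ∀ p, Measurable (G p)) {B : ℝ} (hG0 : ∀ p x, 0 ≤ G p x) (hGB : ∀ p x, G p x ≤ B)
    (n : ℕ) {φ : U → ℝ} (hφ : Measurable φ) {b : ℝ} (hφb : ∀ x, |φ x| ≤ b) :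
    ∫ x, φ x ∂feynmanKacMeasure η₀ G M (n + 1)
      = ∫ x, G n x * ∫ y, φ y ∂M (n + 1) x ∂feynmanKacMeasure η₀ G M n := by
  have := isFiniteMeasure_feynmanKacMeasure (η₀ := η₀) (M := M) hGB (n + 1)
  rw [feynmanKacMeasure_succ] at this ⊢
  rw [integral_comp_kernel_eq_integral_integral, integral_withDensity_ofReal (hGm n) (hG0 n)]
  exact Integrable.of_bound hφ.aestronglyMeasurable b (ae_of_all _ hφb)

end FeynmanKac

section Particles

variable {U Ω : Type*} {N : ℕ} {x : Fin N → U} {φ ψ : U → ℝ}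

noncomputable def empiricalMean (x : Fin N → U) (φ : U → ℝ) : ℝ := (N : ℝ)⁻¹ * ∑ i, φ (x i)

lemma empiricalMean_mul_div_sum (hψ : ∑ i, ψ (x i) ≠ 0) :
    empiricalMean x ψ * ((∑ i, ψ (x i) * φ (x i)) / ∑ i, ψ (x i))
      = empiricalMean x fun u => ψ u * φ u := by
  simp only [empiricalMean]
  field_simp

lemma measurable_empiricalMean [MeasurableSpace U] [MeasurableSpace Ω] {X : Fin N → Ω → U}
    (hX : ∀ i, Measurable (X i)) (hφ : Measurable φ) :
    Measurable fun ω => empiricalMean (fun i => X i ω) φ :=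
  measurable_const.mul (Finset.measurable_sum _ fun i _ => hφ.comp (hX i))

variable [NeZero N]

lemma empiricalMean_le {B : ℝ} (hφ : ∀ u, φ u ≤ B) : empiricalMean x φ ≤ B := by
  have hN : (0 : ℝ) < N := Nat.cast_pos.mpr (NeZero.pos N)
  rw [empiricalMean, inv_mul_le_iff₀ hN]
  simpa using Finset.sum_le_sum fun i (_ : i ∈ univ) => hφ (x i)

lemma abs_empiricalMean_le {b : ℝ} (hφ : ∀ u, |φ u| ≤ b) : |empiricalMean x φ| ≤ b := by
  refine abs_le.mpr ⟨?_, empiricalMean_le fun u => (le_abs_self _).trans (hφ u)⟩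
  have := empiricalMean_le (x := x) (φ := fun u => -φ u) fun u => (neg_le_abs _).trans (hφ u)
  simp only [empiricalMean, Finset.sum_neg_distrib, mul_neg] at this ⊢
  linarith

lemma empiricalMean_one : empiricalMean x (fun _ => 1) = 1 := by
  simp [empiricalMean, NeZero.ne]

lemma integral_empiricalMean_of_map_eq [MeasurableSpace U] [MeasurableSpace Ω] {P : Measure Ω}
    {η : Measure U} {X : Fin N → Ω → U} (hX : ∀ i, Measurable (X i))
    (hXη : ∀ i, P.map (X i) = η) (hφ : Integrable φ η) :
    ∫ ω, empiricalMean (fun i => X i ω) φ ∂P = ∫ u, φ u ∂η := by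
  have h_each (i : Fin N) : ∫ ω, φ (X i ω) ∂P = ∫ u, φ u ∂η := by
    rw [← hXη i, integral_map (hX i).aemeasurable (hXη i ▸ hφ.aestronglyMeasurable)]
  have h_int (i : Fin N) : Integrable (fun ω => φ (X i ω)) P :=
    (hXη i ▸ hφ : Integrable φ (P.map (X i))).comp_measurable (hX i)
  simp only [empiricalMean]
  rw [integral_const_mul, integral_finsetSum _ fun i _ => h_int i]
  simp [h_each, NeZero.ne]

end Particles

section Estimator

variable {U Ω : Type*} {N : ℕ} {G : ℕ → U → ℝ} {X : ℕ → Fin N → Ω → U}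

noncomputable def normalizingConstantEstimate (G : ℕ → U → ℝ) (X : ℕ → Fin N → Ω → U) (n : ℕ)
    (ω : Ω) : ℝ :=
  ∏ p ∈ range n, empiricalMean (fun i => X p i ω) (G p)

@[simp]
lemma normalizingConstantEstimate_zero (ω : Ω) : normalizingConstantEstimate G X 0 ω = 1 :=
  prod_range_zero _

lemma normalizingConstantEstimate_succ (n : ℕ) (ω : Ω) :
    normalizingConstantEstimate G X (n + 1) ω
      = normalizingConstantEstimate G X n ω * empiricalMean (fun i => X n i ω) (G n) :=
  prod_range_succ _ _

lemma abs_normalizingConstantEstimate_le [NeZero N] {B : ℝ} (hGB : ∀ p u, |G p u| ≤ B) (n : ℕ)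
    (ω : Ω) : |normalizingConstantEstimate G X n ω| ≤ B ^ n := by
  rw [normalizingConstantEstimate, abs_prod]
  calc ∏ p ∈ range n, |empiricalMean (fun i => X p i ω) (G p)| ≤ ∏ _p ∈ range n, B :=
        prod_le_prod (fun _ _ => abs_nonneg _) fun p _ => abs_empiricalMean_le (hGB p)
    _ = B ^ n := by rw [prod_const, card_range]

lemma measurable_normalizingConstantEstimate [MeasurableSpace U] {m : MeasurableSpace Ω}
    (hGm : ∀ p, Measurable (G p)) {n : ℕ} (hX : ∀ p < n, ∀ i, Measurable (X p i)) :
    Measurable (normalizingConstantEstimate G X n) :=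
  Finset.measurable_prod _ fun p hp => measurable_empiricalMean (hX p (mem_range.mp hp)) (hGm p)

end Estimator

section ParticleApproximation

variable {U Ω : Type*} [MeasurableSpace U] {mΩ : MeasurableSpace Ω} {N : ℕ}

/-- Only the conditional mean of the next empirical measure is prescribed: it is the
Bayes-updated mixture `Φ_{n+1}(η_n^N)(ψ) = η_n^N(G_n · M_{n+1}ψ) / η_n^N(G_n)`. -/
structure IsParticleApproximation (P : Measure Ω) (ℱ : Filtration ℕ mΩ) (η₀ : Measure U)
    (G : ℕ → U → ℝ) (M : ℕ → Kernel U U) (X : ℕ → Fin N → Ω → U) : Prop where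
  measurable : ∀ n i, Measurable[ℱ n] (X n i)
  map_zero : ∀ i, P.map (X 0 i) = η₀
  condExp_empiricalMean_succ : ∀ (n : ℕ) (ψ : U → ℝ), Measurable ψ → (∃ b, ∀ x, |ψ x| ≤ b) →
    P[fun ω => empiricalMean (fun i => X (n + 1) i ω) ψ | ℱ n] =ᵐ[P] fun ω =>
      (∑ i, G n (X n i ω) * ∫ x, ψ x ∂M (n + 1) (X n i ω)) / ∑ i, G n (X n i ω)

variable {P : Measure Ω} {ℱ : Filtration ℕ mΩ} {η₀ : Measure U} {G : ℕ → U → ℝ}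
  {M : ℕ → Kernel U U} {X : ℕ → Fin N → Ω → U}

namespace IsParticleApproximation

lemma measurable_normalizingConstantEstimate_succ (hX : IsParticleApproximation P ℱ η₀ G M X)
    (hGm : ∀ p, Measurable (G p)) (n : ℕ) :
    Measurable[ℱ n] (normalizingConstantEstimate G X (n + 1)) :=
  _root_.measurable_normalizingConstantEstimate hGm fun p hp i =>
    (hX.measurable p i).mono (ℱ.mono (Nat.lt_succ_iff.mp hp)) le_rfl

theorem integral_normalizingConstantEstimate_mul_empiricalMean [IsFiniteMeasure P]
    [IsFiniteMeasure η₀] [∀ p, IsMarkovKernel (M p)] [NeZero N]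
    (hX : IsParticleApproximation P ℱ η₀ G M X) (hGm : ∀ p, Measurable (G p)) {B : ℝ}
    (hG : ∀ p x, 0 < G p x ∧ G p x ≤ B) (n : ℕ) (φ : U → ℝ) (hφ : Measurable φ)
    (hφb : ∃ b, ∀ x, |φ x| ≤ b) :
    ∫ ω, normalizingConstantEstimate G X n ω * empiricalMean (fun i => X n i ω) φ ∂P
      = ∫ x, φ x ∂feynmanKacMeasure η₀ G M n := by
  have hGB (p : ℕ) (x : U) : |G p x| ≤ B := (abs_of_pos (hG p x).1).trans_le (hG p x).2
  have hXm (p : ℕ) (i : Fin N) : Measurable (X p i) := (hX.measurable p i).mono (ℱ.le p) le_rfl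
  obtain ⟨b, hφb⟩ := hφb
  induction n generalizing φ b with
  | zero =>
    simpa using integral_empiricalMean_of_map_eq (hXm 0) hX.map_zero
      (Integrable.of_bound hφ.aestronglyMeasurable b (ae_of_all _ hφb))
  | succ n ih =>
    set ψ : U → ℝ := fun x => G n x * ∫ y, φ y ∂M (n + 1) x
    have hψ : Measurable ψ := (hGm n).mul (hφ.stronglyMeasurable.integral_kernel).measurable
    have hψb (x : U) : |ψ x| ≤ B * b := by
      rw [abs_mul]
      exact mul_le_mul (hGB n x) (abs_integral_le_of_abs_le hφb) (abs_nonneg _)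
        ((abs_nonneg _).trans (hGB n x))
    have h_int : Integrable (fun ω => empiricalMean (fun i => X (n + 1) i ω) φ) P :=
      Integrable.of_bound (measurable_empiricalMean (hXm (n + 1)) hφ).aestronglyMeasurable b
        (ae_of_all _ fun ω => (Real.norm_eq_abs _).trans_le (abs_empiricalMean_le hφb))
    calc _ = ∫ ω, normalizingConstantEstimate G X (n + 1) ω * ((∑ i, G n (X n i ω) *
            ∫ x, φ x ∂M (n + 1) (X n i ω)) / ∑ i, G n (X n i ω)) ∂P :=
          integral_mul_eq_of_condExp_ae_eq (ℱ.le n)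
            (hX.measurable_normalizingConstantEstimate_succ hGm n).stronglyMeasurable
            (ae_of_all _ fun ω => (Real.norm_eq_abs _).trans_le
              (abs_normalizingConstantEstimate_le hGB (n + 1) ω))
            h_int (hX.condExp_empiricalMean_succ n φ hφ ⟨b, hφb⟩)
      _ = ∫ ω, normalizingConstantEstimate G X n ω * empiricalMean (fun i => X n i ω) ψ ∂P := by
          congr 1
          funext ω
          have h_sum : ∑ i, G n (X n i ω) ≠ 0 :=
            (Finset.sum_pos (fun i _ => (hG n _).1) univ_nonempty).ne'
          rw [normalizingConstantEstimate_succ, mul_assoc,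
            empiricalMean_mul_div_sum (φ := fun u => ∫ y, φ y ∂M (n + 1) u) h_sum]
      _ = ∫ x, ψ x ∂feynmanKacMeasure η₀ G M n := ih ψ hψ (B * b) hψb
      _ = ∫ x, φ x ∂feynmanKacMeasure η₀ G M (n + 1) :=
          (integral_feynmanKacMeasure_succ hGm (fun p x => (hG p x).1.le) (fun p x => (hG p x).2)
            n hφ hφb).symm

end IsParticleApproximation

end ParticleApproximation

/-- Unbiasedness of the particle-filter normalizing-constant estimator: for a
Feynman–Kac flow with unnormalized measures `γₙ(φ) = E[φ(Xₙ) Π_{p<n} G_p(X_p)]`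
(defined below by `γ₀ = η₀`, `γ_{p+1} = (γ_p · G_p)-bind-M_{p+1}`), and a particle system
`X` with `N` particles which, at each step, is sampled conditionally on the past from the
Bayes-updated mixture `Φ_{p+1}(η_p^N)`, the estimator
`(Π_{p<n} η_p^N(G_p)) · η_n^N(φ)` is an unbiased estimator of `γₙ(φ)`; in particular
(taking `φ = 1`) `Π_{p<n} η_p^N(G_p)` is unbiased for `γₙ(1)`. -/
theorem stmt6 (U : Type*) [MeasurableSpace U]
    (η₀ : Measure U) [IsProbabilityMeasure η₀]
    (G : ℕ → U → ℝ) (hGmeas : ∀ p, Measurable (G p))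
    (B : ℝ) (hG : ∀ p x, 0 < G p x ∧ G p x ≤ B)
    (M : ℕ → ProbabilityTheory.Kernel U U) (hM : ∀ p, IsMarkovKernel (M p))
    -- the particle system
    (Ω : Type*) [MeasurableSpace Ω] (P : Measure Ω) [IsProbabilityMeasure P]
    (N : ℕ) (hN : 0 < N)
    (X : ℕ → Fin N → Ω → U)
    (F : ℕ → MeasurableSpace Ω)
    (hFle : ∀ n, F n ≤ ‹MeasurableSpace Ω›) (hFmono : ∀ n, F n ≤ F (n + 1))
    (hXmeas : ∀ n i, Measurable[F n] (X n i))
    -- initial particles are distributed according to η₀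
    (hX0 : ∀ i, Measure.map (X 0 i) P = η₀)
    -- conditional sampling from the Bayes update Φ_{n+1}(η_n^N)
    (hsamp : ∀ (n : ℕ) (ψ : U → ℝ), Measurable ψ → (∃ b, ∀ x, |ψ x| ≤ b) →
      P[fun ω => (N : ℝ)⁻¹ * ∑ i, ψ (X (n + 1) i ω) | F n]
        =ᵐ[P] fun ω =>
          (∑ i, G n (X n i ω) * ∫ x, ψ x ∂(M (n + 1) (X n i ω)))
            / ∑ i, G n (X n i ω)) :
    -- the unnormalized Feynman–Kac measures
    let γ : ℕ → Measure U := fun n =>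
      Nat.rec η₀
        (fun p γp =>
          (γp.withDensity (fun x => ENNReal.ofReal (G p x))).bind (fun x => M (p + 1) x)) n
    ∀ (n : ℕ) (φ : U → ℝ), Measurable φ → (∃ b, ∀ x, |φ x| ≤ b) →
      (∫ ω, (∏ p ∈ Finset.range n, ((N : ℝ)⁻¹ * ∑ i, G p (X p i ω)))
          * ((N : ℝ)⁻¹ * ∑ i, φ (X n i ω)) ∂P = ∫ x, φ x ∂(γ n)) ∧
      ∫ ω, (∏ p ∈ Finset.range n, ((N : ℝ)⁻¹ * ∑ i, G p (X p i ω))) ∂P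
        = (γ n Set.univ).toReal := by
  intro γ n φ hφ hφb
  have : NeZero N := ⟨hN.ne'⟩
  let ℱ : Filtration ℕ ‹MeasurableSpace Ω› := ⟨F, monotone_nat_of_le_succ hFmono, hFle⟩
  have hX : IsParticleApproximation P ℱ η₀ G M X := ⟨hXmeas, hX0, hsamp⟩
  have h_unbiased := hX.integral_normalizingConstantEstimate_mul_empiricalMean hGmeas hG n
  refine ⟨h_unbiased φ hφ hφb, ?_⟩
  have h_one := h_unbiased (fun _ => 1) measurable_const ⟨1, fun _ => by simp⟩
  simp only [empiricalMean_one, mul_one, integral_const, smul_eq_mul, measureReal_def] at h_one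
  exact h_one
end

section
/- Let (Q^l)_{l≥0} be a hierarchy of sampling procedures with weak bias |E[φ(X^l)] - E[φ(X^∞)]| = O(2^{-αl}), increment variances V_l = O(2^{-βl}), and per-sample cost C_l = O(2^{γl}), with α ≥ β/2 > 0 and γ > 0. Consider the multilevel estimator with N_l samples at level l for l = 0,...,L, having variance Σ_{l=0}^L V_l/N_l and cost Σ_{l=0}^L C_l N_l. Minimizing total cost subject to fixed total variance yields N_l ∝ 2^{-(β+γ)l/2}. With L ∝ -log₂(ε)/α and N_0 ∝ ε^{-2} K(ε) where K(ε) = Σ_{l=0}^L 2^{(γ-β)l/2}, the mean-square error is O(ε²) and the total cost is O(ε^{-2}) when β > γ, O(ε^{-2} log(ε)²) when β = γ, and O(ε^{-2+(β-γ)/α}) when β < γ. -/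
/-!
With `L = ⌈-log₂ ε / α⌉` the bias is at most `c_b ε`. Rounding `N_l` up gives
`V_l / N_l ≤ c_v ε² K⁻¹ 2^{(γ-β)l/2}`, so the variances sum to at most `c_v ε²`; rounding adds
at most one sample per level, so the cost is at most `c_c (ε⁻² K² + Σ_{l ≤ L} 2^{γl})`.
The last sum is `O(2^{γL}) = O(ε^{-γ/α})`, which `β ≤ 2α` puts below the claimed rate, while
`K` is bounded, equal to `L + 1 = O(1 - log₂ ε)`, or `O(ε^{-(γ-β)/(2α)})` according as
`γ < β`, `γ = β` or `γ > β`.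
-/

open Finset Real

section Geometric

variable {K : Type*} [Field K] [LinearOrder K] [IsStrictOrderedRing K]

lemma geom_sum_le_pow_div_sub_one {x : K} (hx : 1 < x) (n : ℕ) :
    ∑ i ∈ range n, x ^ i ≤ x ^ n / (x - 1) := by
  rw [geom_sum_eq hx.ne' n]
  gcongr
  linarith

end Geometric

section Levels

variable {b α ε : ℝ}

lemma rpow_neg_mul_ceil_logb_le (hb : 1 < b) (hα : 0 < α) (hε : 0 < ε) :
    b ^ (-(α * ⌈-logb b ε / α⌉₊)) ≤ ε := by
  have hL : -logb b ε / α ≤ ⌈-logb b ε / α⌉₊ := Nat.le_ceil _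
  rw [div_le_iff₀ hα] at hL
  calc b ^ (-(α * ⌈-logb b ε / α⌉₊)) ≤ b ^ logb b ε :=
        rpow_le_rpow_of_exponent_le hb.le (by linarith)
    _ = ε := rpow_logb (by linarith) hb.ne' hε

lemma rpow_mul_ceil_logb_le (hb : 1 < b) (hα : 0 < α) (hε : 0 < ε) (hε1 : ε ≤ 1)
    {t : ℝ} (ht : 0 ≤ t) :
    b ^ (t * ⌈-logb b ε / α⌉₊) ≤ b ^ t * ε ^ (-(t / α)) := by
  have hlog : logb b ε ≤ 0 := logb_nonpos hb hε.le hε1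
  have hL : (⌈-logb b ε / α⌉₊ : ℝ) < -logb b ε / α + 1 :=
    Nat.ceil_lt_add_one (div_nonneg (by linarith) hα.le)
  calc b ^ (t * ⌈-logb b ε / α⌉₊) ≤ b ^ (t + logb b ε * -(t / α)) := by
        apply rpow_le_rpow_of_exponent_le hb.le
        have := mul_le_mul_of_nonneg_left hL.le ht
        linarith [show t * (-logb b ε / α + 1) = t + logb b ε * -(t / α) by ring]
    _ = b ^ t * ε ^ (-(t / α)) := by
        rw [rpow_add (by linarith), rpow_mul (by linarith), rpow_logb (by linarith) hb.ne' hε]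

lemma natCast_ceil_logb_add_one_le (hb : 1 < b) (hα : 0 < α) (hε : 0 < ε) (hε1 : ε ≤ 1) :
    ((⌈-logb b ε / α⌉₊ + 1 : ℕ) : ℝ) ≤ (1 / α + 2) * (1 - logb b ε) := by
  have hlog : logb b ε ≤ 0 := logb_nonpos hb hε.le hε1
  have hL : (⌈-logb b ε / α⌉₊ : ℝ) < -logb b ε / α + 1 :=
    Nat.ceil_lt_add_one (div_nonneg (by linarith) hα.le)
  have : -logb b ε / α ≤ (1 - logb b ε) / α := by gcongr; linarith
  push_cast
  linarith [show (1 / α + 2) * (1 - logb b ε) = (1 - logb b ε) / α + 2 * (1 - logb b ε) by ring]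

lemma sum_rpow_mul_ceil_logb_le (hb : 1 < b) (hα : 0 < α) (hε : 0 < ε) (hε1 : ε ≤ 1)
    {t : ℝ} (ht : 0 < t) :
    ∑ l ∈ range (⌈-logb b ε / α⌉₊ + 1), b ^ (t * l)
      ≤ (b ^ t) ^ 2 / (b ^ t - 1) * ε ^ (-(t / α)) := by
  have hbt : 1 < b ^ t := one_lt_rpow hb ht
  simp only [rpow_mul_natCast (by linarith : 0 ≤ b)]
  calc ∑ l ∈ range (⌈-logb b ε / α⌉₊ + 1), (b ^ t) ^ l
      ≤ b ^ t * (b ^ t) ^ ⌈-logb b ε / α⌉₊ / (b ^ t - 1) := by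
        rw [← pow_succ']; exact geom_sum_le_pow_div_sub_one hbt _
    _ ≤ b ^ t * (b ^ t * ε ^ (-(t / α))) / (b ^ t - 1) := by
        rw [← rpow_mul_natCast (by linarith)]
        gcongr
        exact rpow_mul_ceil_logb_le hb hα hε hε1 ht.le
    _ = (b ^ t) ^ 2 / (b ^ t - 1) * ε ^ (-(t / α)) := by ring

end Levels

section Allocation

variable {b β γ μ s : ℝ}

lemma div_ceil_le {V cv : ℝ} (hb : 0 < b) (hV₀ : 0 ≤ V) (hV : V ≤ cv * b ^ (-(β * s)))
    (hμ : 0 < μ) :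
    V / ⌈μ * b ^ (-((β + γ) * s / 2))⌉₊ ≤ cv / μ * b ^ ((γ - β) * s / 2) := by
  have hw : 0 < μ * b ^ (-((β + γ) * s / 2)) := by positivity
  calc V / ⌈μ * b ^ (-((β + γ) * s / 2))⌉₊
      ≤ cv * b ^ (-(β * s)) / (μ * b ^ (-((β + γ) * s / 2))) :=
        div_le_div₀ (hV₀.trans hV) hV hw (Nat.le_ceil _)
    _ = cv / μ * b ^ ((γ - β) * s / 2) := by
        rw [show -(β * s) = (γ - β) * s / 2 + -((β + γ) * s / 2) by ring, rpow_add hb]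
        field_simp

lemma mul_ceil_le {C cc : ℝ} (hb : 0 < b) (hcc : 0 ≤ cc) (hC : C ≤ cc * b ^ (γ * s))
    (hμ : 0 ≤ μ) :
    C * ⌈μ * b ^ (-((β + γ) * s / 2))⌉₊
      ≤ cc * μ * b ^ ((γ - β) * s / 2) + cc * b ^ (γ * s) := by
  calc C * ⌈μ * b ^ (-((β + γ) * s / 2))⌉₊
      ≤ cc * b ^ (γ * s) * (μ * b ^ (-((β + γ) * s / 2)) + 1) :=
        mul_le_mul hC (Nat.ceil_lt_add_one (by positivity)).le (Nat.cast_nonneg _)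
          (by positivity)
    _ = cc * μ * b ^ ((γ - β) * s / 2) + cc * b ^ (γ * s) := by
        rw [show (γ - β) * s / 2 = γ * s + -((β + γ) * s / 2) by ring, rpow_add hb]
        ring

end Allocation

lemma sum_rpow_mul_le_of_neg {b t : ℝ} (hb : 1 < b) (ht : t < 0) (n : ℕ) :
    ∑ l ∈ range n, b ^ (t * l) ≤ 1 / (1 - b ^ t) := by
  simpa [rpow_mul_natCast (by linarith : 0 ≤ b), ← range_eq_Ico] using
    geom_sum_Ico_le_of_lt_one (m := 0) (n := n) (by positivity)
      (rpow_lt_one_of_one_lt_of_neg hb ht)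

section CostRate

variable {α β γ : ℝ}

noncomputable def mlmcCostRate (α β γ ε : ℝ) : ℝ :=
  if γ < β then ε ^ (-2 : ℝ)
  else if β = γ then ε ^ (-2 : ℝ) * (1 - logb 2 ε) ^ 2
  else ε ^ ((β - γ) / α - 2)

lemma rpow_neg_div_le_mlmcCostRate (hα : 0 < α) (hαβ : β / 2 ≤ α) {ε : ℝ} (hε : 0 < ε)
    (hε1 : ε ≤ 1) : ε ^ (-(γ / α)) ≤ mlmcCostRate α β γ ε := by
  have hβα : β / α ≤ 2 := by rw [div_le_iff₀ hα]; linarith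
  have hanti : ∀ {x y : ℝ}, x ≤ y → ε ^ y ≤ ε ^ x :=
    fun h => rpow_le_rpow_of_exponent_ge hε hε1 h
  unfold mlmcCostRate
  split_ifs with hlt heq
  · exact hanti (by linarith [div_le_div_of_nonneg_right hlt.le hα.le])
  · subst heq
    have hlog : logb 2 ε ≤ 0 := logb_nonpos one_lt_two hε.le hε1
    calc ε ^ (-(β / α)) ≤ ε ^ (-2 : ℝ) := hanti (by linarith)
      _ ≤ ε ^ (-2 : ℝ) * (1 - logb 2 ε) ^ 2 :=
        le_mul_of_one_le_right (by positivity) (one_le_pow₀ (by linarith))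
  · exact hanti (by linarith [show (β - γ) / α = β / α - γ / α by ring])

lemma exists_rpow_neg_two_mul_sq_sum_le_mlmcCostRate (hα : 0 < α) :
    ∃ c > 0, ∀ ε : ℝ, 0 < ε → ε < 1 →
      ε ^ (-2 : ℝ) * (∑ l ∈ range (⌈-logb 2 ε / α⌉₊ + 1), (2 : ℝ) ^ ((γ - β) * l / 2)) ^ 2
        ≤ c * mlmcCostRate α β γ ε := by
  simp only [mul_div_right_comm _ _ (2 : ℝ)]
  unfold mlmcCostRate
  rcases lt_trichotomy γ β with hlt | rfl | hgt
  · have hr : 0 < 1 - (2 : ℝ) ^ ((γ - β) / 2) :=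
      sub_pos.mpr (rpow_lt_one_of_one_lt_of_neg one_lt_two (by linarith))
    refine ⟨(1 / (1 - (2 : ℝ) ^ ((γ - β) / 2))) ^ 2, by positivity, fun ε hε _ => ?_⟩
    rw [if_pos hlt, mul_comm _ (ε ^ (-2 : ℝ))]
    gcongr
    exact sum_rpow_mul_le_of_neg one_lt_two (by linarith) _
  · refine ⟨(1 / α + 2) ^ 2, by positivity, fun ε hε hε1 => ?_⟩
    rw [if_neg (lt_irrefl γ), if_pos rfl]
    simp only [sub_self, zero_div, zero_mul, rpow_zero, sum_const, card_range, nsmul_eq_mul,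
      mul_one]
    calc ε ^ (-2 : ℝ) * ((⌈-logb 2 ε / α⌉₊ + 1 : ℕ) : ℝ) ^ 2
        ≤ ε ^ (-2 : ℝ) * ((1 / α + 2) * (1 - logb 2 ε)) ^ 2 := by
          gcongr
          exact natCast_ceil_logb_add_one_le one_lt_two hα hε hε1.le
      _ = (1 / α + 2) ^ 2 * (ε ^ (-2 : ℝ) * (1 - logb 2 ε) ^ 2) := by ring
  · have hr : 1 < (2 : ℝ) ^ ((γ - β) / 2) := one_lt_rpow one_lt_two (by linarith)
    set c := ((2 : ℝ) ^ ((γ - β) / 2)) ^ 2 / ((2 : ℝ) ^ ((γ - β) / 2) - 1)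
    have hc : 0 < c := div_pos (by positivity) (by linarith)
    refine ⟨c ^ 2, by positivity, fun ε hε hε1 => ?_⟩
    rw [if_neg (not_lt.mpr hgt.le), if_neg hgt.ne]
    calc ε ^ (-2 : ℝ) * (∑ l ∈ range (⌈-logb 2 ε / α⌉₊ + 1), (2 : ℝ) ^ ((γ - β) / 2 * l)) ^ 2
        ≤ ε ^ (-2 : ℝ) * (c * ε ^ (-((γ - β) / 2 / α))) ^ 2 := by
          gcongr
          exact sum_rpow_mul_ceil_logb_le one_lt_two hα hε hε1.le (by linarith)
      _ = c ^ 2 * ε ^ ((β - γ) / α - 2) := by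
          rw [mul_pow, ← rpow_mul_natCast hε.le, mul_left_comm, ← rpow_add hε]
          congr 2
          push_cast
          ring

end CostRate

theorem stmt7_general (α β γ cb cv cc : ℝ)
    (hα : 0 < α) (hγ : 0 < γ) (hαβ : β / 2 ≤ α)
    (hcb : 0 < cb) (hcv : 0 < cv) (hcc : 0 < cc)
    (B V C : ℕ → ℝ)
    (hB : ∀ l, |B l| ≤ cb * (2 : ℝ) ^ (-(α * l)))
    (hV : ∀ l, 0 ≤ V l ∧ V l ≤ cv * (2 : ℝ) ^ (-(β * l)))
    (hC : ∀ l, 0 < C l ∧ C l ≤ cc * (2 : ℝ) ^ (γ * l)) :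
    ∃ Cmse > 0, ∃ Ccost > 0, ∀ ε : ℝ, 0 < ε → ε < 1 →
      let L : ℕ := ⌈(-Real.logb 2 ε) / α⌉₊
      let K : ℝ := ∑ l ∈ Finset.range (L + 1), (2 : ℝ) ^ ((γ - β) * l / 2)
      let Nl : ℕ → ℕ := fun l => ⌈ε ^ (-2 : ℝ) * K * (2 : ℝ) ^ (-((β + γ) * l / 2))⌉₊
      ((B L) ^ 2 + ∑ l ∈ Finset.range (L + 1), V l / (Nl l) ≤ Cmse * ε ^ 2) ∧
      (∑ l ∈ Finset.range (L + 1), C l * (Nl l)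
        ≤ Ccost * (if γ < β then ε ^ (-2 : ℝ)
            else if β = γ then ε ^ (-2 : ℝ) * (1 - Real.logb 2 ε) ^ 2
            else ε ^ ((β - γ) / α - 2))) := by
  obtain ⟨cK, hcK, hK⟩ := exists_rpow_neg_two_mul_sq_sum_le_mlmcCostRate (β := β) (γ := γ) hα
  have hcG : 0 < (2 ^ γ : ℝ) ^ 2 / (2 ^ γ - 1) :=
    div_pos (by positivity) (sub_pos.mpr (one_lt_rpow one_lt_two hγ))
  refine ⟨cb ^ 2 + cv, by positivity, cc * (cK + (2 ^ γ) ^ 2 / (2 ^ γ - 1)), by positivity,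
    fun ε hε hε1 => ?_⟩
  intro L K Nl
  have hK₀ : 0 < K := sum_pos (fun _ _ => by positivity) nonempty_range_add_one
  have hμ : 0 < ε ^ (-2 : ℝ) * K := by positivity
  constructor
  · have hbias : |B L| ≤ cb * ε :=
      (hB L).trans (mul_le_mul_of_nonneg_left (rpow_neg_mul_ceil_logb_le one_lt_two hα hε) hcb.le)
    calc (B L) ^ 2 + ∑ l ∈ range (L + 1), V l / (Nl l)
        ≤ (cb * ε) ^ 2 + ∑ l ∈ range (L + 1), cv / (ε ^ (-2 : ℝ) * K) * 2 ^ ((γ - β) * l / 2) :=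
          add_le_add (sq_le_sq.mpr (hbias.trans (le_abs_self _)))
            (sum_le_sum fun l _ => div_ceil_le two_pos (hV l).1 (hV l).2 hμ)
      _ = (cb * ε) ^ 2 + cv / (ε ^ (-2 : ℝ) * K) * K := by rw [← mul_sum]
      _ = (cb ^ 2 + cv) * ε ^ 2 := by
          rw [rpow_neg hε.le, rpow_two]
          field_simp
  · calc ∑ l ∈ range (L + 1), C l * (Nl l)
        ≤ ∑ l ∈ range (L + 1), (cc * (ε ^ (-2 : ℝ) * K) * 2 ^ ((γ - β) * l / 2)
            + cc * 2 ^ (γ * l)) :=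
          sum_le_sum fun l _ => mul_ceil_le two_pos hcc.le (hC l).2 hμ.le
      _ = cc * (ε ^ (-2 : ℝ) * K ^ 2) + cc * ∑ l ∈ range (L + 1), (2 : ℝ) ^ (γ * l) := by
          rw [sum_add_distrib, ← mul_sum, ← mul_sum]
          ring
      _ ≤ cc * (cK * mlmcCostRate α β γ ε)
            + cc * ((2 ^ γ) ^ 2 / (2 ^ γ - 1) * mlmcCostRate α β γ ε) := by
          gcongr cc * ?_ + cc * ?_
          · exact hK ε hε hε1
          · exact (sum_rpow_mul_ceil_logb_le one_lt_two hα hε hε1.le hγ).trans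
              (mul_le_mul_of_nonneg_left (rpow_neg_div_le_mlmcCostRate hα hαβ hε hε1.le) hcG.le)
      _ = cc * (cK + (2 ^ γ) ^ 2 / (2 ^ γ - 1)) * mlmcCostRate α β γ ε := by ring

/-- The standard multilevel Monte Carlo complexity theorem: with weak bias rate
`|B l| ≤ c_b 2^{-αl}`, increment variances `V l ≤ c_v 2^{-βl}` and per-sample costs
`C l ≤ c_c 2^{γl}` (`α ≥ β/2 > 0`, `γ > 0`), the choices `L ∝ -log₂(ε)/α`,
`N_l = ⌈ε⁻² K(ε) 2^{-(β+γ)l/2}⌉` with `K(ε) = Σ_{l≤L} 2^{(γ-β)l/2}` give mean-square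
error (squared bias plus variance) `O(ε²)` at total cost `O(ε⁻²)` if `β > γ`,
`O(ε⁻² log(ε)²)` if `β = γ`, and `O(ε^{-2+(β-γ)/α})` if `β < γ`. -/
theorem stmt7 (α β γ cb cv cc : ℝ)
    (hα : 0 < α) (hβ : 0 < β) (hγ : 0 < γ) (hαβ : β / 2 ≤ α)
    (hcb : 0 < cb) (hcv : 0 < cv) (hcc : 0 < cc)
    (B V C : ℕ → ℝ)
    (hB : ∀ l, |B l| ≤ cb * (2 : ℝ) ^ (-(α * l)))
    (hV : ∀ l, 0 ≤ V l ∧ V l ≤ cv * (2 : ℝ) ^ (-(β * l)))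
    (hC : ∀ l, 0 < C l ∧ C l ≤ cc * (2 : ℝ) ^ (γ * l)) :
    ∃ Cmse > 0, ∃ Ccost > 0, ∀ ε : ℝ, 0 < ε → ε < 1 →
      let L : ℕ := ⌈(-Real.logb 2 ε) / α⌉₊
      let K : ℝ := ∑ l ∈ Finset.range (L + 1), (2 : ℝ) ^ ((γ - β) * l / 2)
      let Nl : ℕ → ℕ := fun l => ⌈ε ^ (-2 : ℝ) * K * (2 : ℝ) ^ (-((β + γ) * l / 2))⌉₊
      ((B L) ^ 2 + ∑ l ∈ Finset.range (L + 1), V l / (Nl l) ≤ Cmse * ε ^ 2) ∧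
      (∑ l ∈ Finset.range (L + 1), C l * (Nl l)
        ≤ Ccost * (if γ < β then ε ^ (-2 : ℝ)
            else if β = γ then ε ^ (-2 : ℝ) * (1 - Real.logb 2 ε) ^ 2
            else ε ^ ((β - γ) / α - 2))) :=
  stmt7_general α β γ cb cv cc hα hγ hαβ hcb hcv hcc B V C hB hV hC
end
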